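/- For each d ∈ ℕ∖{0}, let B_d ⊂ ℝ^d be a d-dimensional open parallelotope centered at zero (i.e., the image of the open unit cube (−1/2,1/2)^d under an invertible linear transformation of ℝ^d). Then the best constants in the weak type (1,1) inequality for the centered Hardy–Littlewood maximal operators satisfy c_{d,B_d} ≤ c_{d+1,B_{d+1}} for every d ≥ 1. -/

import Mathlib

open MeasureTheory Set
open scoped ENNReal

/-- The open unit cube `Q_d = (-1/2, 1/2)^d` in `ℝ^d`. -/
def unitCube (d : ℕ) : Set (Fin d → ℝ) :=
  Set.univ.pi fun _ : Fin d => Set.Ioo (-(1/2) : ℝ) (1/2)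

/-- The centered Hardy–Littlewood maximal operator on `ℝ^d` associated to a "ball" `B`:
`M_{d,B} f (x) = sup_{r>0} (1/(r^d λ^d(B))) ∫_{x + rB} |f|`. -/
noncomputable def maxOp (d : ℕ) (B : Set (Fin d → ℝ)) (f : (Fin d → ℝ) → ℝ)
    (x : Fin d → ℝ) : ℝ≥0∞ :=
  ⨆ (r : ℝ) (_ : 0 < r),
    (∫⁻ y in (fun b => x + r • b) '' B, ENNReal.ofReal |f y| ∂volume) /
      (ENNReal.ofReal (r ^ d) * volume B)

/-- The best constant in the weak type `(1,1)` inequality for `maxOp d B`. -/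
noncomputable def bestConst (d : ℕ) (B : Set (Fin d → ℝ)) : ℝ :=
  sInf {c : ℝ | 0 < c ∧ ∀ f : (Fin d → ℝ) → ℝ, Integrable f volume → ∀ α : ℝ, 0 < α →
    ENNReal.ofReal α * volume {x | ENNReal.ofReal α < maxOp d B f x} ≤
      ENNReal.ofReal (c * ∫ x, |f x|)}

/-! The best constant does not change under a linear change of variables `x ↦ T x` (numerator,
denominator and `‖f‖₁` all pick up the factor `|det T|`), so both parallelotopes may be replaced
by unit cubes, whose dilates `x + r Q_d` are the balls of the sup-norm.

A constant valid in dimension `d + 1` is valid in dimension `d`. Given `f` on `ℝ^d`, extend it to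
the slab `F(t, x) = 1_{(-L, L)}(t) f(x)`. If some ball of radius `s < R` around `x` carries an
average of `|f|` above `α`, then so does the ball of radius `s` around `(t, x)` for `|t| ≤ L - R`.
The weak-type inequality for `F` thus gives `2(L - R) α |E| ≤ c · 2L ‖f‖₁` for the set `E` of such
`x`, and `L → ∞` removes the loss.

Finally, the Vitali covering lemma shows that `4^(d+1)` is an admissible constant, so the set of
admissible constants in dimension `d + 1` is nonempty and the infima compare. -/

open Metric
open scoped Pointwise

def weakTypeConsts (n : ℕ) (B : Set (Fin n → ℝ)) : Set ℝ :=
  {c : ℝ | 0 < c ∧ ∀ f : (Fin n → ℝ) → ℝ, Integrable f volume → ∀ α : ℝ, 0 < α →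
    ENNReal.ofReal α * volume {x | ENNReal.ofReal α < maxOp n B f x} ≤
      ENNReal.ofReal (c * ∫ x, |f x|)}

lemma bestConst_eq_sInf_weakTypeConsts (n : ℕ) (B : Set (Fin n → ℝ)) :
    bestConst n B = sInf (weakTypeConsts n B) :=
  rfl

section ChangeOfVariables

variable {E : Type*} [NormedAddCommGroup E] [NormedSpace ℝ E] (T : E ≃ₗ[ℝ] E)

noncomputable def absDet : ℝ≥0∞ :=
  ENNReal.ofReal |LinearMap.det (T : E →ₗ[ℝ] E)|

lemma absDet_ne_zero : absDet T ≠ 0 := by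
  simpa [absDet] using (LinearEquiv.isUnit_det' T).ne_zero

lemma absDet_ne_top : absDet T ≠ ∞ :=
  ENNReal.ofReal_ne_top

variable [FiniteDimensional ℝ E] [MeasurableSpace E] [BorelSpace E]

noncomputable def LinearEquiv.toMeasurableEquiv : E ≃ᵐ E :=
  T.toContinuousLinearEquiv.toHomeomorph.toMeasurableEquiv

lemma LinearEquiv.coe_toMeasurableEquiv : ⇑T.toMeasurableEquiv = T :=
  rfl

variable (μ : Measure E) [μ.IsAddHaarMeasure]

lemma addHaar_image_linearEquiv (s : Set E) : μ (T '' s) = absDet T * μ s :=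
  Measure.addHaar_image_linearMap μ (T : E →ₗ[ℝ] E) s

lemma addHaar_eq_absDet_smul_map : μ = absDet T • μ.map T.toMeasurableEquiv := by
  have hdet := (LinearEquiv.isUnit_det' T).ne_zero
  rw [T.coe_toMeasurableEquiv, show ⇑T = ⇑(T : E →ₗ[ℝ] E) from rfl,
    Measure.map_linearMap_addHaar_eq_smul_addHaar μ hdet, smul_smul, absDet,
    ← ENNReal.ofReal_mul (abs_nonneg _), abs_inv, mul_inv_cancel₀ (abs_ne_zero.2 hdet),
    ENNReal.ofReal_one, one_smul]

lemma setLIntegral_image_linearEquiv (s : Set E) (g : E → ℝ≥0∞) :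
    ∫⁻ y in T '' s, g y ∂μ = absDet T * ∫⁻ y in s, g (T y) ∂μ := by
  conv_lhs => rw [addHaar_eq_absDet_smul_map T μ]
  rw [Measure.restrict_smul, lintegral_smul_measure, ← T.coe_toMeasurableEquiv,
    MeasurableEquiv.restrict_map, MeasurableEquiv.preimage_image, lintegral_map_equiv, smul_eq_mul]

lemma integral_eq_absDet_mul_integral_comp (g : E → ℝ) :
    ∫ x, g x ∂μ = (absDet T).toReal * ∫ y, g (T y) ∂μ := by
  conv_lhs => rw [addHaar_eq_absDet_smul_map T μ]
  rw [integral_smul_measure, integral_map_equiv, smul_eq_mul]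
  rfl

lemma MeasureTheory.Integrable.comp_linearEquiv {g : E → ℝ} (hg : Integrable g μ) :
    Integrable (fun y => g (T y)) μ := by
  rw [addHaar_eq_absDet_smul_map T μ,
    integrable_smul_measure (absDet_ne_zero T) (absDet_ne_top T), integrable_map_equiv] at hg
  exact hg

end ChangeOfVariables

section LinearInvariance

variable {n : ℕ} (T : (Fin n → ℝ) ≃ₗ[ℝ] (Fin n → ℝ))

lemma maxOp_image_linearEquiv (B : Set (Fin n → ℝ)) (f : (Fin n → ℝ) → ℝ) (x : Fin n → ℝ) :
    maxOp n (T '' B) f x = maxOp n B (fun y => f (T y)) (T.symm x) := by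
  refine iSup_congr fun r => iSup_congr fun _ => ?_
  have hdilate : (fun b => x + r • b) '' (T '' B) = T '' ((fun b => T.symm x + r • b) '' B) := by
    simp only [image_image, map_add, map_smul, T.apply_symm_apply]
  rw [hdilate, setLIntegral_image_linearEquiv, addHaar_image_linearEquiv, mul_left_comm,
    ENNReal.mul_div_mul_left _ _ (absDet_ne_zero T) (absDet_ne_top T)]

lemma setOf_lt_maxOp_image_linearEquiv (B : Set (Fin n → ℝ)) (f : (Fin n → ℝ) → ℝ) (a : ℝ≥0∞) :
    {x | a < maxOp n (T '' B) f x} = T '' {y | a < maxOp n B (fun y => f (T y)) y} := by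
  ext x
  rw [mem_ofPred_eq, maxOp_image_linearEquiv, T.image_eq_preimage_symm]
  rfl

lemma weakTypeConsts_subset_image_linearEquiv (B : Set (Fin n → ℝ)) :
    weakTypeConsts n B ⊆ weakTypeConsts n (T '' B) := by
  rintro c ⟨hc, hweak⟩
  refine ⟨hc, fun f hf α hα => ?_⟩
  calc ENNReal.ofReal α * volume {x | ENNReal.ofReal α < maxOp n (T '' B) f x}
      = absDet T * (ENNReal.ofReal α *
          volume {y | ENNReal.ofReal α < maxOp n B (fun y => f (T y)) y}) := by
        rw [setOf_lt_maxOp_image_linearEquiv, addHaar_image_linearEquiv, mul_left_comm]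
    _ ≤ absDet T * ENNReal.ofReal (c * ∫ y, |f (T y)|) := by
        gcongr
        exact hweak _ (hf.comp_linearEquiv T volume) α hα
    _ = ENNReal.ofReal (c * ∫ x, |f x|) := by
        rw [integral_eq_absDet_mul_integral_comp T volume (fun x => |f x|), mul_left_comm,
          ENNReal.ofReal_mul ENNReal.toReal_nonneg, ENNReal.ofReal_toReal (absDet_ne_top T)]

lemma weakTypeConsts_image_linearEquiv (B : Set (Fin n → ℝ)) :
    weakTypeConsts n (T '' B) = weakTypeConsts n B := by
  refine (weakTypeConsts_subset_image_linearEquiv T B).antisymm' ?_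
  simpa [image_image] using weakTypeConsts_subset_image_linearEquiv T.symm (T '' B)

end LinearInvariance

section Cube

variable {n : ℕ}

lemma volume_unitCube : volume (unitCube n) = 1 := by
  simp [unitCube, volume_pi_pi, Real.volume_Ioo]
  norm_num

lemma unitCube_eq_ball : unitCube n = ball 0 (1 / 2) := by
  rw [ball_pi _ one_half_pos]
  simp [unitCube, Real.ball_eq_Ioo]

lemma image_add_smul_unitCube (x : Fin n → ℝ) {r : ℝ} (hr : 0 < r) :
    (fun b => x + r • b) '' unitCube n = ball x (r / 2) := by
  rw [unitCube_eq_ball, ← image_image (x + ·) (r • ·), image_smul, _root_.smul_ball hr.ne',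
    ← singleton_add, singleton_add_ball]
  simp [Real.norm_eq_abs, abs_of_pos hr, div_eq_mul_inv]

lemma lt_maxOp_unitCube_iff {f : (Fin n → ℝ) → ℝ} {x : Fin n → ℝ} {a : ℝ≥0∞} :
    a < maxOp n (unitCube n) f x ↔
      ∃ s, 0 < s ∧ a * volume (ball x s) < ∫⁻ y in ball x s, ENNReal.ofReal |f y| := by
  have hdilate : ∀ r, 0 < r →
      (a < (∫⁻ y in (fun b => x + r • b) '' unitCube n, ENNReal.ofReal |f y|) /
          (ENNReal.ofReal (r ^ n) * volume (unitCube n)) ↔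
        a * volume (ball x (r / 2)) < ∫⁻ y in ball x (r / 2), ENNReal.ofReal |f y|) := by
    intro r hr
    have hvol : volume (ball x (r / 2)) = ENNReal.ofReal (r ^ n) := by
      rw [Real.volume_pi_ball x (half_pos hr), Fintype.card_fin, mul_div_cancel₀ r two_ne_zero]
    rw [image_add_smul_unitCube x hr, volume_unitCube, mul_one, ← hvol,
      ENNReal.lt_div_iff_mul_lt (.inl (measure_ball_pos _ _ (half_pos hr)).ne')
        (.inl measure_ball_lt_top.ne)]
  simp only [maxOp, lt_iSup_iff]
  constructor
  · rintro ⟨r, hr, h⟩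
    exact ⟨r / 2, half_pos hr, (hdilate r hr).1 h⟩
  · rintro ⟨s, hs, h⟩
    refine ⟨2 * s, by positivity, (hdilate _ (by positivity)).2 ?_⟩
    rwa [mul_div_cancel_left₀ s two_ne_zero]

def ballLevelSet (f : (Fin n → ℝ) → ℝ) (α R : ℝ) : Set (Fin n → ℝ) :=
  {x | ∃ s, 0 < s ∧ s < R ∧
    ENNReal.ofReal α * volume (ball x s) < ∫⁻ y in ball x s, ENNReal.ofReal |f y|}

lemma monotone_ballLevelSet (f : (Fin n → ℝ) → ℝ) (α : ℝ) : Monotone (ballLevelSet f α) :=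
  fun _ _ hRR' _ ⟨s, hs, hsR, hlt⟩ => ⟨s, hs, hsR.trans_le hRR', hlt⟩

lemma ballLevelSet_subset (f : (Fin n → ℝ) → ℝ) (α R : ℝ) :
    ballLevelSet f α R ⊆ {x | ENNReal.ofReal α < maxOp n (unitCube n) f x} :=
  fun _ ⟨s, hs, _, hlt⟩ => lt_maxOp_unitCube_iff.2 ⟨s, hs, hlt⟩

lemma setOf_lt_maxOp_unitCube_eq_iUnion (f : (Fin n → ℝ) → ℝ) (α : ℝ) :
    {x | ENNReal.ofReal α < maxOp n (unitCube n) f x} = ⋃ k : ℕ, ballLevelSet f α (k + 1) := by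
  refine (iUnion_subset fun k => ballLevelSet_subset f α _).antisymm' fun x hx => ?_
  obtain ⟨s, hs, hlt⟩ := lt_maxOp_unitCube_iff.1 hx
  obtain ⟨k, hk⟩ := exists_nat_gt s
  exact mem_iUnion.2 ⟨k, s, hs, by linarith, hlt⟩

lemma mem_weakTypeConsts_unitCube {c : ℝ} (hc : 0 < c)
    (h : ∀ f : (Fin n → ℝ) → ℝ, Integrable f → ∀ α : ℝ, 0 < α → ∀ R : ℝ, 0 < R →
      ENNReal.ofReal α * volume (ballLevelSet f α R) ≤ ENNReal.ofReal (c * ∫ x, |f x|)) :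
    c ∈ weakTypeConsts n (unitCube n) := by
  refine ⟨hc, fun f hf α hα => ?_⟩
  have hmono : Monotone fun k : ℕ => ballLevelSet f α (k + 1) :=
    (monotone_ballLevelSet f α).comp fun k l hkl => by simpa using hkl
  rw [setOf_lt_maxOp_unitCube_eq_iUnion, hmono.measure_iUnion, ENNReal.mul_iSup]
  exact iSup_le fun k => h f hf α hα _ (by positivity)

end Cube

section Vitali

lemma exists_countable_disjoint_balls_cover {X : Type*} [PseudoMetricSpace X]
    [TopologicalSpace.SeparableSpace X] (E : Set X) (ρ : X → ℝ) (R : ℝ)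
    (hρ : ∀ x ∈ E, 0 < ρ x) (hρR : ∀ x ∈ E, ρ x ≤ R) :
    ∃ u ⊆ E, u.Countable ∧ u.PairwiseDisjoint (fun b => ball b (ρ b)) ∧
      E ⊆ ⋃ b ∈ u, closedBall b (4 * ρ b) := by
  obtain ⟨u, huE, hdisj, hcover⟩ :=
    Vitali.exists_disjoint_subfamily_covering_enlargement_closedBall E id ρ R hρR 4 (by norm_num)
  have hdisj' : u.PairwiseDisjoint fun b => ball b (ρ b) :=
    hdisj.mono fun _ => ball_subset_closedBall
  refine ⟨u, huE, hdisj'.countable_of_isOpen (fun _ _ => isOpen_ball)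
    (fun b hb => nonempty_ball.2 (hρ b (huE hb))), hdisj', fun x hx => ?_⟩
  obtain ⟨b, hb, hsub⟩ := hcover x hx
  exact mem_biUnion hb (hsub (mem_closedBall_self (hρ x hx).le))

variable {n : ℕ}

lemma volume_ballLevelSet_le (f : (Fin n → ℝ) → ℝ) (α R : ℝ) :
    ENNReal.ofReal α * volume (ballLevelSet f α R) ≤
      ENNReal.ofReal (4 ^ n) * ∫⁻ y, ENNReal.ofReal |f y| := by
  set g : (Fin n → ℝ) → ℝ≥0∞ := fun y => ENNReal.ofReal |f y|
  choose! ρ hρ hρR hρlt using fun x (hx : x ∈ ballLevelSet f α R) => hx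
  obtain ⟨u, huE, hu, hdisj, hcover⟩ :=
    exists_countable_disjoint_balls_cover _ ρ R hρ fun x hx => (hρR x hx).le
  have : Countable u := hu.to_subtype
  calc ENNReal.ofReal α * volume (ballLevelSet f α R)
      ≤ ENNReal.ofReal α * ∑' b : u, volume (closedBall (b : Fin n → ℝ) (4 * ρ b)) := by
        gcongr
        exact (measure_mono hcover).trans (measure_biUnion_le volume hu _)
    _ = ∑' b : u,
          ENNReal.ofReal (4 ^ n) * (ENNReal.ofReal α * volume (ball (b : Fin n → ℝ) (ρ b))) := by
        rw [← ENNReal.tsum_mul_left]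
        refine tsum_congr fun b => ?_
        have hb := hρ b (huE b.2)
        rw [Real.volume_pi_closedBall _ (by positivity), Real.volume_pi_ball _ hb, Fintype.card_fin,
          show 2 * (4 * ρ b) = 4 * (2 * ρ b) by ring, mul_pow, ENNReal.ofReal_mul (by positivity),
          mul_left_comm]
    _ ≤ ∑' b : u, ENNReal.ofReal (4 ^ n) * ∫⁻ y in ball (b : Fin n → ℝ) (ρ b), g y := by
        gcongr with b
        exact (hρlt b (huE b.2)).le
    _ = ENNReal.ofReal (4 ^ n) * ∫⁻ y in ⋃ b : u, ball (b : Fin n → ℝ) (ρ b), g y := by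
        rw [ENNReal.tsum_mul_left, lintegral_iUnion (fun _ => measurableSet_ball)
          (hdisj.subtype _ _)]
    _ ≤ ENNReal.ofReal (4 ^ n) * ∫⁻ y, g y := by
        gcongr
        exact Measure.restrict_le_self

lemma four_pow_mem_weakTypeConsts : (4 : ℝ) ^ n ∈ weakTypeConsts n (unitCube n) := by
  refine mem_weakTypeConsts_unitCube (by positivity) fun f hf α _ R _ => ?_
  rw [ENNReal.ofReal_mul (by positivity), ofReal_integral_eq_lintegral_ofReal hf.abs
    (.of_forall fun _ => abs_nonneg _)]
  exact volume_ballLevelSet_le f α R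

end Vitali

section Slab

variable {n : ℕ}

noncomputable def headTailEquiv (n : ℕ) : (Fin (n + 1) → ℝ) ≃ᵐ ℝ × (Fin n → ℝ) :=
  MeasurableEquiv.piFinSuccAbove (fun _ => ℝ) 0

@[simp]
lemma headTailEquiv_apply (z : Fin (n + 1) → ℝ) : headTailEquiv n z = (z 0, Fin.tail z) := by
  simp [headTailEquiv]

lemma measurePreserving_headTailEquiv : MeasurePreserving (headTailEquiv n) :=
  volume_preserving_piFinSuccAbove _ 0

lemma volume_preimage_headTailEquiv (I : Set ℝ) (S : Set (Fin n → ℝ)) :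
    volume (headTailEquiv n ⁻¹' (I ×ˢ S)) = volume I * volume S := by
  rw [← MeasurableEquiv.map_apply, measurePreserving_headTailEquiv.map_eq, Measure.volume_eq_prod,
    Measure.prod_prod]

lemma ball_eq_preimage_headTailEquiv (z : Fin (n + 1) → ℝ) {s : ℝ} (hs : 0 < s) :
    ball z s = headTailEquiv n ⁻¹' (Ioo (z 0 - s) (z 0 + s) ×ˢ ball (Fin.tail z) s) := by
  ext w
  simp [ball_pi _ hs, Real.ball_eq_Ioo, Fin.forall_fin_succ, Fin.tail]

noncomputable def slabExtension (L : ℝ) (f : (Fin n → ℝ) → ℝ) (p : ℝ × (Fin n → ℝ)) : ℝ :=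
  (Ioo (-L) L).indicator 1 p.1 * f p.2

lemma integrable_slabExtension (L : ℝ) {f : (Fin n → ℝ) → ℝ} (hf : Integrable f) :
    Integrable (slabExtension L f) :=
  Integrable.mul_prod ((integrable_indicator_iff measurableSet_Ioo).2
    (integrableOn_const measure_Ioo_lt_top.ne)) hf

lemma integral_abs_slabExtension {L : ℝ} (hL : 0 ≤ L) (f : (Fin n → ℝ) → ℝ) :
    ∫ p, |slabExtension L f p| = 2 * L * ∫ x, |f x| := by
  have habs : ∀ p, |slabExtension L f p| = (Ioo (-L) L).indicator 1 p.1 * |f p.2| := fun p => by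
    by_cases hp : p.1 ∈ Ioo (-L) L <;> simp [slabExtension, hp]
  simp_rw [habs, Measure.volume_eq_prod]
  rw [integral_prod_mul ((Ioo (-L) L).indicator 1) fun x => |f x|,
    integral_indicator_one measurableSet_Ioo, Real.volume_real_Ioo_of_le (by linarith)]
  ring

lemma setLIntegral_slabExtension {L : ℝ} {f : (Fin n → ℝ) → ℝ} (hf : AEMeasurable f)
    {I : Set ℝ} (hI : MeasurableSet I) (hIL : I ⊆ Ioo (-L) L) {S : Set (Fin n → ℝ)}
    (hS : MeasurableSet S) :
    ∫⁻ p in I ×ˢ S, ENNReal.ofReal |slabExtension L f p| =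
      volume I * ∫⁻ y in S, ENNReal.ofReal |f y| := by
  have hslab : ∀ p ∈ I ×ˢ S, ENNReal.ofReal |slabExtension L f p| = 1 * ENNReal.ofReal |f p.2| :=
    fun p hp => by simp [slabExtension, hIL hp.1]
  rw [setLIntegral_congr_fun (hI.prod hS) hslab, Measure.volume_eq_prod, ← Measure.prod_restrict,
    lintegral_prod_mul (f := fun _ => 1) (g := fun y => ENNReal.ofReal |f y|) aemeasurable_const
      (by fun_prop), setLIntegral_one]

lemma preimage_headTailEquiv_subset_ballLevelSet {f : (Fin n → ℝ) → ℝ} (hf : AEMeasurable f)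
    {α a R L : ℝ} (haRL : a + R ≤ L) :
    headTailEquiv n ⁻¹' (Icc (-a) a ×ˢ ballLevelSet f α R) ⊆
      ballLevelSet (slabExtension L f ∘ headTailEquiv n) α R := by
  rintro z ⟨⟨hza, hzb⟩, s, hs, hsR, hlt⟩
  simp only [headTailEquiv_apply] at hza hzb hs hsR hlt
  have hIL : Ioo (z 0 - s) (z 0 + s) ⊆ Ioo (-L) L := Ioo_subset_Ioo (by linarith) (by linarith)
  have hI : volume (Ioo (z 0 - s) (z 0 + s)) ≠ 0 := by simp [Real.volume_Ioo, hs]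
  refine ⟨s, hs, hsR, ?_⟩
  rw [ball_eq_preimage_headTailEquiv z hs, volume_preimage_headTailEquiv]
  simp only [Function.comp_apply]
  rw [measurePreserving_headTailEquiv.setLIntegral_comp_preimage_emb
      (headTailEquiv n).measurableEmbedding (fun p => ENNReal.ofReal |slabExtension L f p|),
    setLIntegral_slabExtension hf measurableSet_Ioo hIL measurableSet_ball, mul_left_comm]
  exact ENNReal.mul_lt_mul_right hI measure_Ioo_lt_top.ne hlt

lemma ENNReal.le_of_forall_natCast_mul_le {a b : ℝ≥0∞} (hb : b ≠ ∞)
    (h : ∀ k : ℕ, k * a ≤ (k + 1) * b) : a ≤ b := by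
  by_contra! hba
  obtain ⟨k, hk⟩ := ENNReal.exists_nat_mul_gt (tsub_pos_of_lt hba).ne' hb
  rw [ENNReal.mul_sub fun _ _ => ENNReal.natCast_ne_top k] at hk
  exact hk.not_ge (tsub_le_iff_left.2 (by simpa [add_mul] using h k))

lemma weakTypeConsts_succ_subset :
    weakTypeConsts (n + 1) (unitCube (n + 1)) ⊆ weakTypeConsts n (unitCube n) := by
  rintro c ⟨hc, hweak⟩
  refine mem_weakTypeConsts_unitCube hc fun f hf α hα R hR => ?_
  refine ENNReal.le_of_forall_natCast_mul_le ENNReal.ofReal_ne_top fun k => ?_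
  set F := slabExtension ((k + 1) * R) f ∘ headTailEquiv n
  have hF : Integrable F := (measurePreserving_headTailEquiv.integrable_comp_emb
    (headTailEquiv n).measurableEmbedding).2 (integrable_slabExtension _ hf)
  have hFnorm : ∫ z, |F z| = 2 * ((k + 1) * R) * ∫ x, |f x| :=
    (measurePreserving_headTailEquiv.integral_comp' fun p => |slabExtension _ f p|).trans
      (integral_abs_slabExtension (by positivity) f)
  have h2R : ENNReal.ofReal (2 * R) ≠ 0 := by simpa using hR
  refine (ENNReal.mul_le_mul_iff_right h2R ENNReal.ofReal_ne_top).1 ?_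
  calc ENNReal.ofReal (2 * R) * (k * (ENNReal.ofReal α * volume (ballLevelSet f α R)))
      = ENNReal.ofReal α *
          volume (headTailEquiv n ⁻¹' (Icc (-(k * R)) (k * R) ×ˢ ballLevelSet f α R)) := by
        rw [volume_preimage_headTailEquiv, Real.volume_Icc,
          show k * R - -(k * R) = k * (2 * R) by ring, ENNReal.ofReal_mul (Nat.cast_nonneg k),
          ENNReal.ofReal_natCast]
        ring
    _ ≤ ENNReal.ofReal α * volume (ballLevelSet F α R) := by
        gcongr
        exact preimage_headTailEquiv_subset_ballLevelSet hf.aemeasurable (by linarith)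
    _ ≤ ENNReal.ofReal α *
          volume {z | ENNReal.ofReal α < maxOp (n + 1) (unitCube (n + 1)) F z} := by
        gcongr
        exact ballLevelSet_subset F α R
    _ ≤ ENNReal.ofReal (c * ∫ z, |F z|) := hweak F hF α hα
    _ = ENNReal.ofReal (2 * R) * ((k + 1) * ENNReal.ofReal (c * ∫ x, |f x|)) := by
        rw [hFnorm, ← ENNReal.ofReal_natCast,
          ← ENNReal.ofReal_one, ← ENNReal.ofReal_add (Nat.cast_nonneg k) zero_le_one,
          ← ENNReal.ofReal_mul (by positivity), ← ENNReal.ofReal_mul (by positivity)]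
        ring_nf

end Slab

/-- For each `d ∈ ℕ \ {0}`, let `B_d ⊆ ℝ^d` be a `d`-dimensional open
parallelotope centered at zero, i.e., the image of the open unit cube `(-1/2,1/2)^d` under an
invertible linear transformation of `ℝ^d`. Then the best constants in the weak type `(1,1)`
inequality for the centered Hardy–Littlewood maximal operators satisfy
`c_{d,B_d} ≤ c_{d+1,B_{d+1}}` for every `d ≥ 1`. -/
theorem bestConst_parallelotope_mono
    (B : ∀ d : ℕ, Set (Fin d → ℝ))
    (hB : ∀ d : ℕ, 1 ≤ d →
      ∃ T : (Fin d → ℝ) ≃ₗ[ℝ] (Fin d → ℝ), B d = T '' unitCube d)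
    (d : ℕ) (hd : 1 ≤ d) :
    bestConst d (B d) ≤ bestConst (d + 1) (B (d + 1)) := by
  obtain ⟨T, hT⟩ := hB d hd
  obtain ⟨T', hT'⟩ := hB (d + 1) (Nat.le_add_left 1 d)
  rw [bestConst_eq_sInf_weakTypeConsts, bestConst_eq_sInf_weakTypeConsts, hT, hT',
    weakTypeConsts_image_linearEquiv, weakTypeConsts_image_linearEquiv]
  exact csInf_le_csInf ⟨0, fun c hc => hc.1.le⟩ ⟨_, four_pow_mem_weakTypeConsts⟩
    weakTypeConsts_succ_subset
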